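/- arXiv:0706.0415 — 4 statements merged into one kernel-verified Lean document; each statement's English description precedes it below -/
import Mathlib

section
/- Let p(x,ξ) = (1/2)∑_{j,k} a_{j,k}(x)ξⱼξₖ be a smooth Hamiltonian on ℝ²ⁿ with complete flow exp(tH_p), let p₀(x,ξ) = |ξ|²/2 with flow exp(tH_{p₀})(x,ξ) = (x+tξ, ξ), and let κ(x,ξ) = (x - iξ, ξ) be the complex linear map on ℂ²ⁿ. Define b(s,z,ζ) = (1/2)∑_{j,k}(a_{j,k}(z + iζ + sζ) - δ_{j,k})ζⱼζₖ (with a_{j,k} extended holomorphically) and let R_s be the time-s flow of the (time-dependent) Hamiltonian b. Then R_s = κ ∘ exp(-sH_{p₀}) ∘ exp(sH_p) ∘ κ⁻¹. -/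
/-- Complex phase space `ℂⁿ × ℂⁿ`. -/
abbrev PhaseC (n : ℕ) := (Fin n → ℂ) × (Fin n → ℂ)

/-- The principal symbol `p(x,ξ) = (1/2)∑ a_{jk}(x) ξⱼ ξₖ` (holomorphically extended). -/
noncomputable def pSymb (n : ℕ) (a : Fin n → Fin n → (Fin n → ℂ) → ℂ) :
    PhaseC n → ℂ :=
  fun w => (1 / 2) * ∑ j, ∑ k, a j k w.1 * w.2 j * w.2 k

/-- `b(s,z,ζ) = (1/2)∑ (a_{jk}(z + iζ + sζ) - δ_{jk}) ζⱼ ζₖ`. -/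
noncomputable def bSymb (n : ℕ) (a : Fin n → Fin n → (Fin n → ℂ) → ℂ) (s : ℝ) :
    PhaseC n → ℂ :=
  fun w => (1 / 2) * ∑ j, ∑ k,
    (a j k (fun l => w.1 l + (Complex.I + (s : ℂ)) * w.2 l)
      - if j = k then 1 else 0) * w.2 j * w.2 k

/-- Hamiltonian vector field `(∂f/∂ζ, -∂f/∂z)` of `f` on complex phase space. -/
noncomputable def hamVF (n : ℕ) (f : PhaseC n → ℂ) : PhaseC n → PhaseC n :=
  fun w => (fun j => fderiv ℂ f w (0, Pi.single j 1),
            fun j => -fderiv ℂ f w (Pi.single j 1, 0))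

/-- `κ(x,ξ) = (x - iξ, ξ)`. -/
def kappaMap (n : ℕ) : PhaseC n → PhaseC n :=
  fun w => (fun j => w.1 j - Complex.I * w.2 j, w.2)

/-- `κ⁻¹(z,ζ) = (z + iζ, ζ)`. -/
def kappaInv (n : ℕ) : PhaseC n → PhaseC n :=
  fun w => (fun j => w.1 j + Complex.I * w.2 j, w.2)

/-- The free flow `exp(tH_{p₀})(x,ξ) = (x + tξ, ξ)`. -/
def freeFlow (n : ℕ) (t : ℝ) : PhaseC n → PhaseC n :=
  fun w => (fun j => w.1 j + (t : ℂ) * w.2 j, w.2)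

/-!
Write `S_c (z, ζ) = (z + c ζ, ζ)`. Then `κ⁻¹ = S_i`, `κ ∘ exp(-sH_{p₀}) = S_{-(i+s)}` and
`b(s, ·) = p ∘ S_{i+s} - p₀`. As `S_c` is linear symplectic, `H_{p ∘ S_c} = S_c⁻¹ ∘ H_p ∘ S_c`,
while `H_{p₀}(z, ζ) = (ζ, 0)` is the velocity of the moving shear `t ↦ S_{i+t}`. Hence
`t ↦ S_{i+t} (R_t w)` is an integral curve of `H_p` through `κ⁻¹ w` at `t = 0`, and so equals
`exp(tH_p) (κ⁻¹ w)`. Uniqueness of integral curves only needs `H_p` to be locally Lipschitz,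
which holds because, by the Schwarz lemma, the derivative of a holomorphic map is locally
Lipschitz.
-/

open Set Metric

section
variable {E F : Type*} [NormedAddCommGroup E] [NormedSpace ℂ E]
  [NormedAddCommGroup F] [NormedSpace ℂ F] {f : E → F}

lemma norm_fderiv_sub_fderiv_add_le (hf : Differentiable ℂ f) {c h : E} {r K : ℝ} (hr : 0 < r)
    (hK : ∀ y ∈ ball c r, ‖f y - f (y + h)‖ ≤ K) :
    ‖fderiv ℂ f c - fderiv ℂ f (c + h)‖ ≤ 2 * K / r := by
  have hfh : Differentiable ℂ fun y => f (y + h) := hf.comp (differentiable_id.add_const h)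
  rw [← fderiv_comp_add_right, ← fderiv_fun_sub (hf c) (hfh c)]
  refine Complex.norm_fderiv_le_div_of_mapsTo_ball (hf.sub hfh).differentiableOn
    (fun y hy => ?_) hr
  rw [mem_closedBall, dist_eq_norm]
  calc _ ≤ ‖f y - f (y + h)‖ + ‖f c - f (c + h)‖ := norm_sub_le _ _
    _ ≤ K + K := add_le_add (hK y hy) (hK c (mem_ball_self hr))
    _ = 2 * K := by ring

theorem Differentiable.locallyLipschitz_fderiv (hf : Differentiable ℂ f) :
    LocallyLipschitz (fderiv ℂ f) := by
  intro x
  obtain ⟨r, hr, hfx⟩ := Metric.continuousAt_iff.1 (hf.continuous.continuousAt (x := x)) 1 one_pos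
  obtain ⟨δ, hδ, rfl⟩ : ∃ δ > 0, r = 3 * δ := ⟨r / 3, by positivity, by ring⟩
  simp only [dist_eq_norm] at hfx
  have hbound : ∀ y ∈ ball x (2 * δ), ‖fderiv ℂ f y‖ ≤ 2 / δ := by
    intro y hy
    refine Complex.norm_fderiv_le_div_of_mapsTo_ball hf.differentiableOn (fun z hz => ?_) hδ
    rw [mem_ball_iff_norm] at hy hz
    rw [mem_closedBall_iff_norm]
    calc ‖f z - f y‖ ≤ ‖f z - f x‖ + ‖f x - f y‖ := norm_sub_le_norm_sub_add_norm_sub _ _ _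
      _ ≤ 1 + 1 := by
        rw [norm_sub_rev (f x)]
        gcongr
        · exact (hfx (by linarith [norm_sub_le_norm_sub_add_norm_sub z y x])).le
        · exact (hfx (by linarith)).le
      _ = 2 := by norm_num
  have hlip : ∀ y ∈ ball x (2 * δ), ∀ z ∈ ball x (2 * δ), ‖f y - f z‖ ≤ 2 / δ * ‖y - z‖ :=
    fun y hy z hz => (convex_ball x (2 * δ)).norm_image_sub_le_of_norm_fderiv_le
      (fun w _ => hf w) hbound hz hy
  refine ⟨(8 / δ ^ 2).toNNReal, ball x (δ / 2), ball_mem_nhds x (by positivity),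
    LipschitzOnWith.of_dist_le_mul fun y hy y' hy' => ?_⟩
  rw [mem_ball_iff_norm] at hy hy'
  have key := norm_fderiv_sub_fderiv_add_le hf (c := y) (h := y' - y) (half_pos hδ)
    (K := 2 / δ * ‖y - y'‖) fun z hz => by
      rw [mem_ball_iff_norm] at hz
      have hzx : ‖z - x‖ < δ := by linarith [norm_sub_le_norm_sub_add_norm_sub z y x]
      have hh : ‖y' - y‖ < δ := by
        linarith [norm_sub_le_norm_sub_add_norm_sub y' x y, norm_sub_rev x y]
      have := hlip z (by rw [mem_ball_iff_norm]; linarith) (z + (y' - y)) (by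
        rw [mem_ball_iff_norm, add_sub_right_comm]
        linarith [norm_add_le (z - x) (y' - y)])
      simpa using this
  rw [add_sub_cancel] at key
  rw [dist_eq_norm, dist_eq_norm, Real.coe_toNNReal _ (by positivity)]
  calc _ ≤ 2 * (2 / δ * ‖y - y'‖) / (δ / 2) := key
    _ = 8 / δ ^ 2 * ‖y - y'‖ := by field_simp; ring
end

theorem ODE_solution_unique_of_locallyLipschitz {E : Type*} [NormedAddCommGroup E]
    [NormedSpace ℝ E] {v : E → E} (hv : LocallyLipschitz v) {f g : ℝ → E} {t₀ : ℝ}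
    (hf : ∀ t, HasDerivAt f (v (f t)) t) (hg : ∀ t, HasDerivAt g (v (g t)) t)
    (heq : f t₀ = g t₀) : f = g := by
  funext t
  obtain ⟨A, B, ht, ht₀⟩ : ∃ A B, t ∈ Ioo A B ∧ t₀ ∈ Ioo A B :=
    ⟨min t t₀ - 1, max t t₀ + 1, by constructor <;> constructor <;> grind⟩
  have hfc : Continuous f := continuous_iff_continuousAt.2 fun t => (hf t).continuousAt
  have hgc : Continuous g := continuous_iff_continuousAt.2 fun t => (hg t).continuousAt
  set S := f '' Icc A B ∪ g '' Icc A B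
  have hS : IsCompact S :=
    (isCompact_Icc.image hfc).union (isCompact_Icc.image hgc)
  obtain ⟨K, hK⟩ := hv.locallyLipschitzOn.exists_lipschitzOnWith_of_compact hS
  exact ODE_solution_unique_of_mem_Ioo (v := fun _ => v) (s := fun _ => S) (fun _ _ => hK) ht₀
    (fun τ hτ => ⟨hf τ, Or.inl (mem_image_of_mem f (Ioo_subset_Icc_self hτ))⟩)
    (fun τ hτ => ⟨hg τ, Or.inr (mem_image_of_mem g (Ioo_subset_Icc_self hτ))⟩) heq ht

section PhaseSpace

variable {n : ℕ}

noncomputable def shear (n : ℕ) (c : ℂ) : PhaseC n →L[ℂ] PhaseC n :=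
  ContinuousLinearMap.prod
    (ContinuousLinearMap.fst ℂ _ _ + c • ContinuousLinearMap.snd ℂ (Fin n → ℂ) (Fin n → ℂ))
    (ContinuousLinearMap.snd ℂ _ _)

@[simp]
lemma shear_apply (c : ℂ) (w : PhaseC n) : shear n c w = (w.1 + c • w.2, w.2) := rfl

lemma shear_neg_shear (c : ℂ) (w : PhaseC n) : shear n (-c) (shear n c w) = w := by
  ext <;> simp

lemma kappaInv_eq_shear : kappaInv n = shear n Complex.I := by
  ext w j <;> simp [kappaInv]

lemma kappaMap_freeFlow (t : ℝ) (w : PhaseC n) :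
    kappaMap n (freeFlow n (-t) w) = shear n (-(Complex.I + t)) w := by
  ext j
  · simp only [kappaMap, freeFlow, shear_apply, Pi.add_apply, Pi.smul_apply, smul_eq_mul,
      Complex.ofReal_neg]
    ring
  · simp [kappaMap, freeFlow]

lemma locallyLipschitz_hamVF {f : PhaseC n → ℂ} (hf : Differentiable ℂ f) :
    LocallyLipschitz (hamVF n f) := by
  let Φ : (PhaseC n →L[ℂ] ℂ) →L[ℂ] PhaseC n :=
    (ContinuousLinearMap.pi fun j => ContinuousLinearMap.apply ℂ ℂ (0, Pi.single j 1)).prod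
      (-ContinuousLinearMap.pi fun j => ContinuousLinearMap.apply ℂ ℂ (Pi.single j 1, 0))
  have : hamVF n f = Φ ∘ fderiv ℂ f := rfl
  rw [this]
  exact Φ.lipschitz.locallyLipschitz.comp hf.locallyLipschitz_fderiv

lemma hamVF_sub {f g : PhaseC n → ℂ} {x : PhaseC n} (hf : DifferentiableAt ℂ f x)
    (hg : DifferentiableAt ℂ g x) : hamVF n (f - g) x = hamVF n f x - hamVF n g x := by
  ext j
  · simp [hamVF, fderiv_sub hf hg]
  · simp only [hamVF, fderiv_sub hf hg, sub_apply, Prod.snd_sub, Pi.sub_apply]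
    ring

lemma hamVF_comp_shear {f : PhaseC n → ℂ} (c : ℂ) (x : PhaseC n)
    (hf : DifferentiableAt ℂ f (shear n c x)) :
    hamVF n (f ∘ shear n c) x = shear n (-c) (hamVF n f (shear n c x)) := by
  have hchain : ∀ v, fderiv ℂ (f ∘ shear n c) x v = fderiv ℂ f (shear n c x) (shear n c v) :=
    fun v => by rw [fderiv_comp x hf (shear n c).differentiableAt, ContinuousLinearMap.fderiv]; rfl
  have hshear_snd : ∀ e : Fin n → ℂ, shear n c (0, e) = c • (e, 0) + (0, e) := by
    intro e; ext <;> simp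
  have hshear_fst : ∀ e : Fin n → ℂ, shear n c (e, 0) = (e, 0) := by
    intro e; ext <;> simp
  ext j
  · simp only [hamVF, hchain, hshear_snd, map_add, map_smul]
    simp only [shear_apply, smul_eq_mul, neg_smul, Pi.add_apply, Pi.neg_apply, Pi.smul_apply,
      mul_neg, neg_neg]
    ring
  · simp [hamVF, hchain, hshear_fst]

noncomputable def freeSymb (n : ℕ) : PhaseC n → ℂ := fun w => (1 / 2) * ∑ j, w.2 j * w.2 j

lemma hamVF_freeSymb (x : PhaseC n) : hamVF n (freeSymb n) x = (x.2, 0) := by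
  have hcoord : ∀ j, HasFDerivAt (fun w : PhaseC n => w.2 j)
      ((ContinuousLinearMap.proj j).comp (ContinuousLinearMap.snd ℂ _ _)) x :=
    fun j => ((ContinuousLinearMap.proj j).comp
      (ContinuousLinearMap.snd ℂ (Fin n → ℂ) (Fin n → ℂ))).hasFDerivAt
  have hd : HasFDerivAt (freeSymb n) _ x := (HasFDerivAt.fun_sum (u := Finset.univ)
    fun j _ => (hcoord j).mul (hcoord j)).const_mul (1 / 2 : ℂ)
  ext j
  · simp only [hamVF, hd.fderiv, Finset.sum_add_distrib, smul_apply,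
      add_apply, sum_apply,
      ContinuousLinearMap.comp_apply, ContinuousLinearMap.coe_snd', ContinuousLinearMap.proj_apply,
      Pi.single_apply, smul_eq_mul, mul_ite, mul_one, mul_zero, Finset.sum_ite_eq',
      Finset.mem_univ, if_true]
    ring
  · simp [hamVF, hd.fderiv]

lemma pSymb_differentiable {a : Fin n → Fin n → (Fin n → ℂ) → ℂ}
    (hhol : ∀ j k, Differentiable ℂ (a j k)) : Differentiable ℂ (pSymb n a) := by
  unfold pSymb
  fun_prop

lemma bSymb_eq_comp_shear_sub (a : Fin n → Fin n → (Fin n → ℂ) → ℂ) (s : ℝ) :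
    bSymb n a s = pSymb n a ∘ shear n (Complex.I + s) - freeSymb n := by
  funext w
  simp only [bSymb, pSymb, freeSymb, Function.comp_apply, Pi.sub_apply, shear_apply,
    sub_mul, Finset.sum_sub_distrib, ite_mul, one_mul, zero_mul, Finset.sum_ite_eq,
    Finset.mem_univ, if_true, mul_sub]
  rfl

lemma hamVF_bSymb {a : Fin n → Fin n → (Fin n → ℂ) → ℂ}
    (hhol : ∀ j k, Differentiable ℂ (a j k)) (s : ℝ) (x : PhaseC n) :
    hamVF n (bSymb n a s) x = shear n (-(Complex.I + s))
      (hamVF n (pSymb n a) (shear n (Complex.I + s) x)) - (x.2, 0) := by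
  have hP := pSymb_differentiable hhol
  rw [bSymb_eq_comp_shear_sub, hamVF_sub ((hP _).comp x (shear n _).differentiableAt)
    (by unfold freeSymb; fun_prop), hamVF_comp_shear _ _ (hP _), hamVF_freeSymb]

lemma hasDerivAt_shear {γ : ℝ → PhaseC n} {γ' : PhaseC n} {t : ℝ} (hγ : HasDerivAt γ γ' t) :
    HasDerivAt (fun τ : ℝ => shear n (Complex.I + τ) (γ τ))
      (shear n (Complex.I + t) γ' + ((γ t).2, 0)) t := by
  have hc : HasDerivAt (fun τ : ℝ => Complex.I + τ) 1 t := by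
    simpa using ((hasDerivAt_id t).ofReal_comp).const_add Complex.I
  have h1 := (ContinuousLinearMap.fst ℝ (Fin n → ℂ) (Fin n → ℂ)).hasFDerivAt.comp_hasDerivAt t hγ
  have h2 := (ContinuousLinearMap.snd ℝ (Fin n → ℂ) (Fin n → ℂ)).hasFDerivAt.comp_hasDerivAt t hγ
  convert (h1.add (hc.smul h2)).prodMk h2 using 1
  · ext j <;> simp
  · ext j
    · simp only [shear_apply, Prod.mk_add_mk, add_zero, Pi.add_apply, Pi.smul_apply, smul_eq_mul,
        ContinuousLinearMap.coe_fst', ContinuousLinearMap.coe_snd', Function.comp_apply, one_smul]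
      ring
    · simp

lemma hasDerivAt_shear_of_bSymb {a : Fin n → Fin n → (Fin n → ℂ) → ℂ}
    (hhol : ∀ j k, Differentiable ℂ (a j k)) {γ : ℝ → PhaseC n} {t : ℝ}
    (hγ : HasDerivAt γ (hamVF n (bSymb n a t) (γ t)) t) :
    HasDerivAt (fun τ : ℝ => shear n (Complex.I + τ) (γ τ))
      (hamVF n (pSymb n a) (shear n (Complex.I + t) (γ t))) t := by
  convert hasDerivAt_shear hγ using 1
  ext j
  · simp only [shear_apply, hamVF_bSymb hhol, Prod.mk_sub_mk, sub_zero, Prod.mk_add_mk, add_zero,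
      Pi.add_apply, Pi.sub_apply, Pi.smul_apply, smul_eq_mul]
    ring
  · simp [hamVF_bSymb hhol]

end PhaseSpace

theorem stmt_3_general (n : ℕ) (a : Fin n → Fin n → (Fin n → ℂ) → ℂ)
    (hhol : ∀ j k, Differentiable ℂ (a j k))
    (expP : ℝ → PhaseC n → PhaseC n) (Rfl : ℝ → PhaseC n → PhaseC n)
    (hexpP0 : ∀ w, expP 0 w = w)
    (hexpP : ∀ t w, HasDerivAt (fun t => expP t w) (hamVF n (pSymb n a) (expP t w)) t)
    (hR0 : ∀ w, Rfl 0 w = w)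
    (hR : ∀ s w, HasDerivAt (fun s => Rfl s w) (hamVF n (bSymb n a s) (Rfl s w)) s) :
    ∀ (s : ℝ) (w : PhaseC n),
      Rfl s w = kappaMap n (freeFlow n (-s) (expP s (kappaInv n w))) := by
  intro s w
  have hconj : (fun t : ℝ => shear n (Complex.I + t) (Rfl t w)) = fun t => expP t (kappaInv n w) :=
    ODE_solution_unique_of_locallyLipschitz (locallyLipschitz_hamVF (pSymb_differentiable hhol))
      (fun t => hasDerivAt_shear_of_bSymb hhol (hR t w)) (fun t => hexpP t _) (t₀ := 0)
      (by simp [hR0, hexpP0, kappaInv_eq_shear])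
  rw [kappaMap_freeFlow, ← congrFun hconj s, shear_neg_shear]

/-- If `expP` is the (complete) flow of `H_p` and `Rfl s` the flow of the time-dependent
Hamiltonian `b(s,·)`, then `R_s = κ ∘ exp(-sH_{p₀}) ∘ exp(sH_p) ∘ κ⁻¹`. -/
theorem stmt_3 (n : ℕ) (a : Fin n → Fin n → (Fin n → ℂ) → ℂ)
    (hsym : ∀ j k, a j k = a k j)
    (hhol : ∀ j k, Differentiable ℂ (a j k))
    (expP : ℝ → PhaseC n → PhaseC n) (Rfl : ℝ → PhaseC n → PhaseC n)
    (hexpP0 : ∀ w, expP 0 w = w)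
    (hexpP : ∀ t w, HasDerivAt (fun t => expP t w) (hamVF n (pSymb n a) (expP t w)) t)
    (hR0 : ∀ w, Rfl 0 w = w)
    (hR : ∀ s w, HasDerivAt (fun s => Rfl s w) (hamVF n (bSymb n a s) (Rfl s w)) s) :
    ∀ (s : ℝ) (w : PhaseC n),
      Rfl s w = kappaMap n (freeFlow n (-s) (expP s (kappaInv n w))) :=
  stmt_3_general n a hhol expP Rfl hexpP0 hexpP hR0 hR
end

section
/- Let ξ ∈ ℂⁿ and let ρ₊ ≥ 0. There exists δ > 0 (any sufficiently small δ works) and a constant such that ∫_{ℝⁿ} exp((2|Im ξ|·|x-y| - |x-y|² - δ|η+ξ|²/⟨η+ξ⟩)/(2h)) dη ≤ Const·exp((2|Im ξ|·|x-y| - |x-y|² - δ|Im ξ|²/⟨Im ξ⟩)/(2h))·h^{n/2}·C for all x, y ∈ ℝⁿ and h ∈ (0,1], by splitting the η-integral into the regions {|η + Re ξ| ≥ |Im ξ|} and {|η + Re ξ| ≤ |Im ξ|}. Consequently ∫_{ℝⁿ×ℝⁿ} exp((2|Im ξ|·|x-y| - |x-y|² - δ|η+ξ|²/⟨η+ξ⟩)/(2h))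 dy dη ≤ C' exp((|Im ξ|² - δ|Im ξ|²/(2⟨Im ξ⟩))/(2h)) for h small. -/
/-!
Write `r = bracketRatio`, so that `|w|²/⟨w⟩ = r(|w|²)` and `|η + ξ|²/⟨η + ξ⟩ = r(q + b)` with
`q = |η + Re ξ|²`, `b = |Im ξ|²`. Submultiplicativity of `⟨·⟩` gives
`r(q + b) ≥ r(b) + r(q) / (2⟨Im ξ⟩)`, so with `δ = 1` the integrand is at most
`exp ((A - r(b)) / 2h) · exp (-r(|η + Re ξ|²) / (4⟨Im ξ⟩ h))`, where
`A = 2|Im ξ||x - y| - |x - y|²`. The substitution `η = √h u`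
together with `r(h q) / h ≥ r(q)` extracts `h^(n/2)`, and `r(t²) ≥ t - 1` makes what remains
exponentially decaying. For the double integral, completing the square
`2|Im ξ||x - y| - |x - y|² = |Im ξ|² - (|x - y| - |Im ξ|)²` leaves a Gaussian shell in `y`
that is integrable uniformly in `h ≤ 1`.
-/

open MeasureTheory Module Real

noncomputable def bracketRatio (q : ℝ) : ℝ := q / √(1 + q)

lemma bracketRatio_add (q b : ℝ) : bracketRatio (q + b) = (q + b) / √(1 + q + b) := by
  rw [bracketRatio, add_assoc]

lemma bracketRatio_nonneg {q : ℝ} (hq : 0 ≤ q) : 0 ≤ bracketRatio q := by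
  unfold bracketRatio; positivity

@[fun_prop]
lemma measurable_bracketRatio : Measurable bracketRatio := by
  unfold bracketRatio; fun_prop

lemma sub_one_le_bracketRatio_sq (t : ℝ) : t - 1 ≤ bracketRatio (t ^ 2) := by
  unfold bracketRatio
  rcases le_or_gt t 1 with ht | ht
  · have : 0 ≤ t ^ 2 / √(1 + t ^ 2) := by positivity
    linarith
  · have hsqrt : √(1 + t ^ 2) ≤ 1 + t := by
      rw [sqrt_le_left (by linarith)]; nlinarith
    rw [le_div_iff₀ (by positivity)]
    nlinarith

lemma bracketRatio_add_le {q b : ℝ} (hq : 0 ≤ q) (hb : 0 ≤ b) :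
    bracketRatio b + bracketRatio q / (2 * √(1 + b)) ≤ bracketRatio (q + b) := by
  unfold bracketRatio
  set u := √(1 + b)
  set w := √(1 + q)
  set v := √(1 + (q + b))
  have hu : 0 < u := sqrt_pos.2 (by linarith)
  have hv : 0 < v := sqrt_pos.2 (by linarith)
  have hu2 : u ^ 2 = 1 + b := sq_sqrt (by linarith)
  have hv2 : v ^ 2 = 1 + (q + b) := sq_sqrt (by linarith)
  have hv_le : v ≤ u * w := by
    rw [← sqrt_mul (by linarith)]
    exact sqrt_le_sqrt (by nlinarith)
  have hbv : b * v ≤ (q / 2 + b) * u := by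
    refine (pow_le_pow_iff_left₀ (by positivity) (by positivity) two_ne_zero).1 ?_
    rw [mul_pow, mul_pow, hu2, hv2]
    nlinarith [mul_nonneg hb hq, mul_nonneg hq hq, mul_nonneg (mul_nonneg hb hq) hq]
  calc b / u + q / w / (2 * u) = b / u + q / (2 * (u * w)) := by ring
    _ ≤ b / u + q / (2 * v) := by gcongr
    _ ≤ (q / 2 + b) / v + q / (2 * v) := by
      gcongr ?_ + _
      rwa [div_le_div_iff₀ hu hv]
    _ = (q + b) / v := by ring

lemma bracketRatio_le_div {q h : ℝ} (hq : 0 ≤ q) (h0 : 0 < h) (h1 : h ≤ 1) :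
    bracketRatio q ≤ bracketRatio (h * q) / h := by
  unfold bracketRatio
  rw [mul_div_assoc, mul_div_cancel_left₀ _ h0.ne']
  exact div_le_div_of_nonneg_left hq (sqrt_pos.2 (by positivity))
    (sqrt_le_sqrt (by nlinarith))

lemma exp_sub_bracketRatio_add_le (A : ℝ) {q b h : ℝ} (hq : 0 ≤ q) (hb : 0 ≤ b) (h0 : 0 < h) :
    exp ((A - bracketRatio (q + b)) / (2 * h))
      ≤ exp ((A - bracketRatio b) / (2 * h)) * exp (-(1 / (4 * √(1 + b)) / h * bracketRatio q)) := by
  rw [← exp_add, exp_le_exp]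
  have hsplit := bracketRatio_add_le hq hb
  have hu : 0 < √(1 + b) := sqrt_pos.2 (by linarith)
  calc (A - bracketRatio (q + b)) / (2 * h)
      ≤ (A - bracketRatio b - bracketRatio q / (2 * √(1 + b))) / (2 * h) :=
        div_le_div_of_nonneg_right (by linarith) (by positivity)
    _ = _ := by field_simp; ring

section HaarMeasure

variable {E : Type*} [NormedAddCommGroup E] [NormedSpace ℝ E] [FiniteDimensional ℝ E]
  [MeasurableSpace E] [BorelSpace E] (μ : Measure E) [μ.IsAddHaarMeasure]

lemma integrable_exp_neg_mul_norm {c : ℝ} (hc : 0 < c) :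
    Integrable (fun x ↦ exp (-(c * ‖x‖))) μ := by
  set N : ℕ := finrank ℝ E + 1
  set k : ℝ := c / N
  have hN : (N : ℝ) ≠ 0 := by positivity
  have hk : 0 < k := by positivity
  have hbound : Integrable (fun x : E ↦ (1 + ‖k • x‖) ^ (-(N : ℝ))) μ :=
    (integrable_one_add_norm (by simp [N])).comp_smul hk.ne'
  refine hbound.mono' (by fun_prop) (ae_of_all _ fun x ↦ ?_)
  rw [norm_of_nonneg (exp_pos _).le, norm_smul, norm_of_nonneg hk.le, rpow_neg (by positivity),
    rpow_natCast, exp_neg]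
  refine inv_anti₀ (by positivity) ?_
  calc (1 + k * ‖x‖) ^ N ≤ exp (k * ‖x‖) ^ N := by
        gcongr; linarith [add_one_le_exp (k * ‖x‖)]
    _ = exp (c * ‖x‖) := by
        rw [← exp_nat_mul]; congr 1; simp only [k]; field_simp

lemma integrable_exp_neg_mul_bracketRatio {c : ℝ} (hc : 0 < c) :
    Integrable (fun x ↦ exp (-(c * bracketRatio (‖x‖ ^ 2)))) μ := by
  refine ((integrable_exp_neg_mul_norm μ hc).const_mul (exp c)).mono'
    (Measurable.aestronglyMeasurable (by fun_prop)) (ae_of_all _ fun x ↦ ?_)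
  rw [norm_of_nonneg (exp_pos _).le, ← exp_add, exp_le_exp]
  nlinarith [mul_le_mul_of_nonneg_left (sub_one_le_bracketRatio_sq ‖x‖) hc.le]

lemma integrable_exp_neg_sq_norm_sub (m : ℝ) :
    Integrable (fun x ↦ exp (-(‖x‖ - m) ^ 2 / 2)) μ := by
  refine ((integrable_exp_neg_mul_norm μ one_pos).const_mul (exp ((2 * m + 1) / 2))).mono'
    (by fun_prop) (ae_of_all _ fun x ↦ ?_)
  rw [norm_of_nonneg (exp_pos _).le, ← exp_add, exp_le_exp]
  nlinarith [sq_nonneg (‖x‖ - (m + 1))]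


lemma integral_exp_neg_div_mul_bracketRatio_le {c h : ℝ} (hc : 0 < c) (h0 : 0 < h) (h1 : h ≤ 1) :
    ∫ x, exp (-(c / h * bracketRatio (‖x‖ ^ 2))) ∂μ
      ≤ h ^ ((finrank ℝ E : ℝ) / 2) * ∫ x, exp (-(c * bracketRatio (‖x‖ ^ 2))) ∂μ := by
  have hs : 0 < √h := sqrt_pos.2 h0
  have hpow : √h ^ finrank ℝ E = h ^ ((finrank ℝ E : ℝ) / 2) := by
    rw [sqrt_eq_rpow, ← rpow_natCast, ← rpow_mul h0.le]; ring_nf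
  have hscale := Measure.integral_comp_smul_of_nonneg μ
    (fun x ↦ exp (-(c / h * bracketRatio (‖x‖ ^ 2)))) √h (hR := hs.le)
  rw [eq_inv_smul_iff₀ (by positivity), smul_eq_mul, hpow] at hscale
  rw [← hscale]
  refine mul_le_mul_of_nonneg_left (integral_mono_of_nonneg (ae_of_all _ fun _ ↦ (exp_pos _).le)
    (integrable_exp_neg_mul_bracketRatio μ hc) (ae_of_all _ fun x ↦ ?_)) (by positivity)
  simp only [norm_smul, norm_of_nonneg hs.le, mul_pow, sq_sqrt h0.le, exp_le_exp, neg_le_neg_iff]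
  rw [div_mul_eq_mul_div, mul_div_assoc]
  exact mul_le_mul_of_nonneg_left (bracketRatio_le_div (sq_nonneg _) h0 h1) hc.le

lemma integral_exp_sub_bracketRatio_le (A : ℝ) {b h : ℝ} (hb : 0 ≤ b) (h0 : 0 < h) (h1 : h ≤ 1)
    (v : E) :
    ∫ η, exp ((A - bracketRatio (‖η + v‖ ^ 2 + b)) / (2 * h)) ∂μ
      ≤ (∫ u, exp (-(1 / (4 * √(1 + b)) * bracketRatio (‖u‖ ^ 2))) ∂μ)
          * exp ((A - bracketRatio b) / (2 * h)) * h ^ ((finrank ℝ E : ℝ) / 2) := by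
  set c := 1 / (4 * √(1 + b))
  have hc : 0 < c := by positivity
  calc ∫ η, exp ((A - bracketRatio (‖η + v‖ ^ 2 + b)) / (2 * h)) ∂μ
      ≤ ∫ η, exp ((A - bracketRatio b) / (2 * h)) * exp (-(c / h * bracketRatio (‖η + v‖ ^ 2))) ∂μ :=
        integral_mono_of_nonneg (ae_of_all _ fun _ ↦ (exp_pos _).le)
          (((integrable_exp_neg_mul_bracketRatio μ (div_pos hc h0)).comp_add_right v).const_mul _)
          (ae_of_all _ fun η ↦ exp_sub_bracketRatio_add_le A (sq_nonneg _) hb h0)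
    _ = exp ((A - bracketRatio b) / (2 * h)) * ∫ η, exp (-(c / h * bracketRatio (‖η‖ ^ 2))) ∂μ := by
        rw [integral_const_mul,
          integral_add_right_eq_self (fun η ↦ exp (-(c / h * bracketRatio (‖η‖ ^ 2))))]
    _ ≤ exp ((A - bracketRatio b) / (2 * h))
          * (h ^ ((finrank ℝ E : ℝ) / 2) * ∫ u, exp (-(c * bracketRatio (‖u‖ ^ 2))) ∂μ) := by
        gcongr
        exact integral_exp_neg_div_mul_bracketRatio_le μ hc h0 h1
    _ = _ := by ring


lemma integral_prod_exp_sub_bracketRatio_le (m : ℝ) {h : ℝ} (h0 : 0 < h) (h1 : h ≤ 1) (x v : E) :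
    ∫ p, exp ((2 * m * ‖x - p.1‖ - ‖x - p.1‖ ^ 2 - bracketRatio (‖p.2 + v‖ ^ 2 + m ^ 2)) / (2 * h))
        ∂(μ.prod μ)
      ≤ (∫ z, exp (-(‖z‖ - m) ^ 2 / 2) ∂μ)
          * (∫ u, exp (-(1 / (4 * √(1 + m ^ 2)) * bracketRatio (‖u‖ ^ 2))) ∂μ)
          * exp ((m ^ 2 - bracketRatio (m ^ 2)) / (2 * h)) := by
  set c := 1 / (4 * √(1 + m ^ 2))
  have hc : 0 < c := by positivity
  set B := exp ((m ^ 2 - bracketRatio (m ^ 2)) / (2 * h))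
  have hpoint : ∀ {t q : ℝ}, 0 ≤ q →
      exp ((2 * m * t - t ^ 2 - bracketRatio (q + m ^ 2)) / (2 * h))
        ≤ B * (exp (-(t - m) ^ 2 / 2) * exp (-(c * bracketRatio q))) := by
    intro t q hq
    have hgauss : (t - m) ^ 2 / 2 ≤ (t - m) ^ 2 / (2 * h) :=
      div_le_div_of_nonneg_left (sq_nonneg _) (by positivity) (by linarith)
    have hdecay : c * bracketRatio q ≤ c / h * bracketRatio q :=
      mul_le_mul_of_nonneg_right (le_div_self hc.le h0 h1) (bracketRatio_nonneg hq)
    calc exp ((2 * m * t - t ^ 2 - bracketRatio (q + m ^ 2)) / (2 * h))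
        ≤ exp ((2 * m * t - t ^ 2 - bracketRatio (m ^ 2)) / (2 * h))
            * exp (-(c / h * bracketRatio q)) :=
          exp_sub_bracketRatio_add_le _ hq (sq_nonneg m) h0
      _ ≤ B * exp (-(t - m) ^ 2 / 2) * exp (-(c * bracketRatio q)) := by
          gcongr
          · rw [← exp_add, exp_le_exp]
            have hsq : (2 * m * t - t ^ 2 - bracketRatio (m ^ 2)) / (2 * h)
                = (m ^ 2 - bracketRatio (m ^ 2)) / (2 * h) - (t - m) ^ 2 / (2 * h) := by ring
            linarith
      _ = _ := by ring
  have hf := (integrable_exp_neg_sq_norm_sub μ m).comp_sub_left x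
  have hg := (integrable_exp_neg_mul_bracketRatio μ hc).comp_add_right v
  calc _ ≤ ∫ p, B * (exp (-(‖x - p.1‖ - m) ^ 2 / 2) * exp (-(c * bracketRatio (‖p.2 + v‖ ^ 2))))
          ∂(μ.prod μ) :=
        integral_mono_of_nonneg (ae_of_all _ fun _ ↦ (exp_pos _).le)
          ((hf.mul_prod hg).const_mul B) (ae_of_all _ fun p ↦ hpoint (sq_nonneg _))
    _ = _ := by
        rw [integral_const_mul, integral_prod_mul (fun y ↦ exp (-(‖x - y‖ - m) ^ 2 / 2))
          (fun η ↦ exp (-(c * bracketRatio (‖η + v‖ ^ 2)))),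
          integral_sub_left_eq_self (fun z ↦ exp (-(‖z‖ - m) ^ 2 / 2)),
          integral_add_right_eq_self (fun u ↦ exp (-(c * bracketRatio (‖u‖ ^ 2))))]
        ring

end HaarMeasure

/-- The Gaussian estimate obtained by splitting the `η`-integral into the regions
`{|η + Re ξ| ≥ |Im ξ|}` and `{|η + Re ξ| ≤ |Im ξ|}`, and its consequence for the
double `(y,η)`-integral.  Here `⟨w⟩ = √(1+|w|²)` and `|η+ξ|² = |η+Re ξ|² + |Im ξ|²`. -/
theorem stmt_6 (n : ℕ) (Reξ Imξ : EuclideanSpace ℝ (Fin n)) :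
    ∃ δ > (0 : ℝ), ∃ K > (0 : ℝ),
      (∀ x y : EuclideanSpace ℝ (Fin n), ∀ h ∈ Set.Ioc (0 : ℝ) 1,
        (∫ η : EuclideanSpace ℝ (Fin n),
            Real.exp ((2 * ‖Imξ‖ * ‖x - y‖ - ‖x - y‖ ^ 2
              - δ * (‖η + Reξ‖ ^ 2 + ‖Imξ‖ ^ 2)
                  / Real.sqrt (1 + ‖η + Reξ‖ ^ 2 + ‖Imξ‖ ^ 2)) / (2 * h)))
          ≤ K * Real.exp ((2 * ‖Imξ‖ * ‖x - y‖ - ‖x - y‖ ^ 2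
              - δ * ‖Imξ‖ ^ 2 / Real.sqrt (1 + ‖Imξ‖ ^ 2)) / (2 * h))
            * h ^ ((n : ℝ) / 2))
      ∧ ∃ K' > (0 : ℝ), ∃ h₀ > (0 : ℝ),
          ∀ x : EuclideanSpace ℝ (Fin n), ∀ h ∈ Set.Ioo (0 : ℝ) h₀,
            (∫ p : EuclideanSpace ℝ (Fin n) × EuclideanSpace ℝ (Fin n),
                Real.exp ((2 * ‖Imξ‖ * ‖x - p.1‖ - ‖x - p.1‖ ^ 2
                  - δ * (‖p.2 + Reξ‖ ^ 2 + ‖Imξ‖ ^ 2)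
                      / Real.sqrt (1 + ‖p.2 + Reξ‖ ^ 2 + ‖Imξ‖ ^ 2)) / (2 * h)))
              ≤ K' * Real.exp ((‖Imξ‖ ^ 2
                  - δ * ‖Imξ‖ ^ 2 / (2 * Real.sqrt (1 + ‖Imξ‖ ^ 2))) / (2 * h)) := by
  set m := ‖Imξ‖
  have hc : 0 < 1 / (4 * √(1 + m ^ 2)) := by positivity
  have hK₀ := integral_exp_pos (integrable_exp_neg_mul_bracketRatio
    (volume : Measure (EuclideanSpace ℝ (Fin n))) hc)
  have hK₁ := integral_exp_pos (integrable_exp_neg_sq_norm_sub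
    (volume : Measure (EuclideanSpace ℝ (Fin n))) m)
  refine ⟨1, one_pos, _, hK₀, fun x y h ⟨h0, h1⟩ ↦ ?_, _, mul_pos hK₁ hK₀, 1, one_pos,
    fun x h ⟨h0, h1⟩ ↦ ?_⟩
  · simpa only [one_mul, ← bracketRatio_add, ← bracketRatio.eq_1, finrank_euclideanSpace_fin]
      using integral_exp_sub_bracketRatio_le volume (2 * m * ‖x - y‖ - ‖x - y‖ ^ 2)
        (sq_nonneg m) h0 h1 Reξ
  · simp only [one_mul, ← bracketRatio_add, Measure.volume_eq_prod]
    refine (integral_prod_exp_sub_bracketRatio_le volume m h0 h1.le x Reξ).trans ?_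
    gcongr
    have := bracketRatio_nonneg (sq_nonneg m)
    rw [bracketRatio] at this ⊢
    rw [mul_comm 2, ← div_div]
    linarith
end

section
/- Let Φ₀(z) = |Im z|²/2 and suppose ψ(s,z,η) is a holomorphic generating function satisfying ∇_z ψ(s,z,η(s,z)) = -Im z and y(s,z) = ∇_η ψ(s,z,η(s,z)) with η(s,z) = -Im y(s,z), and suppose ψ solves ∂_s ψ + b(s, z, ∇_z ψ) = 0 where b(s,z,ζ) is a Hamiltonian with Im b(s, z, -Im z) = 0 for z in the relevant domain. Then the critical value s ↦ Φ₀(y(s,z)) - Im(ψ(s,z,η(s,z)) - y(s,z)·η(s,z)) is constant in s; its derivative equals -Im(∂_s ψ)(s,z,η(s,z)) = -Im b(s,z,-Im z) = 0. -/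
/-!
Since `η = -Im y` is real at the critical point, `Im (y · η) = -|Im y|²` and the critical value
equals `-|η|²/2 - Im ψ(s, z, η(s))`. Differentiating, the term `Im (∇_η ψ · η') = Im (y · η')
= -η · η'` cancels the derivative of `-|η|²/2` (the envelope theorem), leaving
`-Im ∂_s ψ = Im b(s, z, -Im z) = 0`.
-/

lemma HasDerivAt.complex_re {f : ℝ → ℂ} {f' : ℂ} {s : ℝ} (hf : HasDerivAt f f' s) :
    HasDerivAt (fun t => (f t).re) f'.re s :=
  Complex.reCLM.hasFDerivAt.comp_hasDerivAt s hf

lemma HasDerivAt.complex_im {f : ℝ → ℂ} {f' : ℂ} {s : ℝ} (hf : HasDerivAt f f' s) :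
    HasDerivAt (fun t => (f t).im) f'.im s :=
  Complex.imCLM.hasFDerivAt.comp_hasDerivAt s hf

lemma HasDerivAt.im_eq_zero_of_forall_im_eq_zero {f : ℝ → ℂ} {f' : ℂ} {s : ℝ}
    (hf : HasDerivAt f f' s) (hreal : ∀ t, (f t).im = 0) : f'.im = 0 := by
  have h := hf.complex_im
  simp only [hreal] at h
  exact h.unique (hasDerivAt_const s 0)

lemma HasFDerivAt.hasDerivAt_comp_prodMk {E F : Type*} [NormedAddCommGroup E]
    [NormedSpace ℝ E] [NormedAddCommGroup F] [NormedSpace ℝ F]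
    {Ψ : ℝ → E → F} {γ : ℝ → E} {γ' : E} {L : (ℝ × E) →L[ℝ] F} {s : ℝ}
    (hΨ : HasFDerivAt (fun p : ℝ × E => Ψ p.1 p.2) L (s, γ s)) (hγ : HasDerivAt γ γ' s) :
    HasDerivAt (fun t => Ψ t (γ t)) (L (1, 0) + L (0, γ')) s := by
  have h := hΨ.comp_hasDerivAt s ((hasDerivAt_id s).prodMk hγ)
  rwa [← map_add, Prod.mk_add_mk, add_zero, zero_add]

lemma critical_value_eq_of_eq_neg_im {n : ℕ} (y η : Fin n → ℂ) (w : ℂ)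
    (hη : ∀ j, η j = -((y j).im : ℂ)) :
    (∑ j, (y j).im ^ 2) / 2 - (w - ∑ j, y j * η j).im
      = -(∑ j, (η j).re ^ 2) / 2 - w.im := by
  simp only [hη, Complex.sub_im, Complex.im_sum, Complex.mul_im, Complex.neg_re,
    Complex.neg_im, Complex.ofReal_re, Complex.ofReal_im, mul_zero, zero_add, neg_sq,
    mul_neg, ← sq, Finset.sum_neg_distrib]
  ring

theorem stmt_13_general (n : ℕ) (z : Fin n → ℂ)
    (ψ : ℝ → (Fin n → ℂ) → (Fin n → ℂ) → ℂ)
    (b : ℝ → (Fin n → ℂ) → (Fin n → ℂ) → ℂ)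
    (y η η' : ℝ → Fin n → ℂ) (ψs : ℝ → ℂ)
    (L : ℝ → (ℝ × (Fin n → ℂ)) →L[ℝ] ℂ)
    (hη : ∀ s, HasDerivAt η (η' s) s)
    (hηreal : ∀ s j, η s j = (-(((y s j).im : ℝ)) : ℂ))
    (hL : ∀ s, HasFDerivAt (fun p : ℝ × (Fin n → ℂ) => ψ p.1 z p.2) (L s) (s, η s))
    (hLs : ∀ s, L s (1, 0) = ψs s)
    (hLη : ∀ s v, L s (0, v) = ∑ j, y s j * v j)
    (heik : ∀ s, ψs s = -(b s z (fun j => (-((z j).im : ℝ) : ℂ))))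
    (hbreal : ∀ s, (b s z (fun j => (-((z j).im : ℝ) : ℂ))).im = 0) :
    (∀ s, HasDerivAt
        (fun s => (∑ j, ((y s j).im) ^ 2) / 2
          - (ψ s z (η s) - ∑ j, y s j * η s j).im) 0 s)
    ∧ ∀ s₁ s₂,
        ((∑ j, ((y s₁ j).im) ^ 2) / 2
            - (ψ s₁ z (η s₁) - ∑ j, y s₁ j * η s₁ j).im)
          = ((∑ j, ((y s₂ j).im) ^ 2) / 2
            - (ψ s₂ z (η s₂) - ∑ j, y s₂ j * η s₂ j).im) := by
  have hderiv : ∀ s, HasDerivAt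
      (fun s => (∑ j, ((y s j).im) ^ 2) / 2
        - (ψ s z (η s) - ∑ j, y s j * η s j).im) 0 s := by
    intro s
    simp only [fun t => critical_value_eq_of_eq_neg_im (y t) (η t) (ψ t z (η t)) (hηreal t)]
    have hηj : ∀ j, HasDerivAt (fun t => η t j) (η' s j) s :=
      fun j => hasDerivAt_pi.1 (hη s) j
    have hη'_real : ∀ j, (η' s j).im = 0 :=
      fun j => (hηj j).im_eq_zero_of_forall_im_eq_zero fun t => by simp [hηreal]
    have hψs_real : (ψs s).im = 0 := by simp [heik, hbreal]
    have hψ := (hL s).hasDerivAt_comp_prodMk (Ψ := fun t => ψ t z) (hη s)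
    rw [hLs, hLη] at hψ
    have hquad : HasDerivAt (fun t => -(∑ j, (η t j).re ^ 2) / 2)
        (-(∑ j, 2 * (η s j).re ^ 1 * (η' s j).re) / 2) s :=
      ((HasDerivAt.fun_sum fun j _ => (hηj j).complex_re.pow 2).neg).div_const 2
    refine (hquad.sub hψ.complex_im).congr_deriv ?_
    simp only [Complex.add_im, Complex.im_sum, Complex.mul_im, hη'_real, hψs_real, hηreal s,
      Complex.neg_re, Complex.ofReal_re, mul_zero, zero_add, pow_one, mul_neg, neg_mul,
      Finset.sum_neg_distrib, mul_assoc, ← Finset.mul_sum]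
    ring
  exact ⟨hderiv, is_const_of_deriv_eq_zero (fun s => (hderiv s).differentiableAt)
    (fun s => (hderiv s).deriv)⟩

/-- Critical-value computation of Lemma 6.2 (pointcrit): under the critical-point
conditions (`η(s) = -Im y(s)`, `∇_η ψ = y(s)`, joint differentiability in `(s,η)` with
partial `∂_s ψ = ψs(s)`), the eikonal relation `ψs(s) = -b(s,z,-Im z)` and the reality
`Im b(s,z,-Im z) = 0`, the critical value
`s ↦ Φ₀(y(s)) - Im(ψ(s,z,η(s)) - y(s)·η(s))` has vanishing derivative, hence is
constant in `s`. -/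
theorem stmt_13 (n : ℕ) (z : Fin n → ℂ)
    (ψ : ℝ → (Fin n → ℂ) → (Fin n → ℂ) → ℂ)
    (b : ℝ → (Fin n → ℂ) → (Fin n → ℂ) → ℂ)
    (y η y' η' : ℝ → Fin n → ℂ) (ψs : ℝ → ℂ)
    (L : ℝ → (ℝ × (Fin n → ℂ)) →L[ℝ] ℂ)
    (hy : ∀ s, HasDerivAt y (y' s) s)
    (hη : ∀ s, HasDerivAt η (η' s) s)
    (hηreal : ∀ s j, η s j = (-(((y s j).im : ℝ)) : ℂ))
    (hL : ∀ s, HasFDerivAt (fun p : ℝ × (Fin n → ℂ) => ψ p.1 z p.2) (L s) (s, η s))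
    (hLs : ∀ s, L s (1, 0) = ψs s)
    (hLη : ∀ s v, L s (0, v) = ∑ j, y s j * v j)
    (heik : ∀ s, ψs s = -(b s z (fun j => (-((z j).im : ℝ) : ℂ))))
    (hbreal : ∀ s, (b s z (fun j => (-((z j).im : ℝ) : ℂ))).im = 0) :
    (∀ s, HasDerivAt
        (fun s => (∑ j, ((y s j).im) ^ 2) / 2
          - (ψ s z (η s) - ∑ j, y s j * η s j).im) 0 s)
    ∧ ∀ s₁ s₂,
        ((∑ j, ((y s₁ j).im) ^ 2) / 2
            - (ψ s₁ z (η s₁) - ∑ j, y s₁ j * η s₁ j).im)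
          = ((∑ j, ((y s₂ j).im) ^ 2) / 2
            - (ψ s₂ z (η s₂) - ∑ j, y s₂ j * η s₂ j).im) :=
  stmt_13_general n z ψ b y η η' ψs L hη hηreal hL hLs hLη heik hbreal
end

section
/- Let Φ: Ω → ℝ be C² on an open set Ω ⊂ ℂⁿ, z ∈ Ω, R > 0, r > 0 with the ball B(z, r) ⊂ Ω, and let C_r = (1/2)·sup_{|y-z|≤r} ‖Hess Φ(y)‖. Define φ_z(y,ζ) = Φ(y) - Im((z-y)·ζ). Then along the contour γ_z : ζ = (2/i)∇_z Φ(z) + i R·conj(z - y), |y - z| < r, one has φ_z(y,ζ) - Φ(z) = Φ(y) - Φ(z) - ∇_{Re z}Φ(z)·Re(y-z) - ∇_{Im z}Φ(z)·Im(y-z) - R|y-z|² ≤ (C_r - R)|y - z|². In particular γ_z is a good contour for φ_z as soon as R > C_r. -/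
/-!
Along the contour, `Im((z - y)·ζ)` is exactly `dΦ(z)(y - z) + R|y - z|²`, once the real
differential is written in the coordinates `Re`, `Im`; this is the identity. The inequality is
then the second-order Taylor estimate `Φ(y) - Φ(z) - dΦ(z)(y - z) ≤ (‖Hess Φ‖ / 2)‖y - z‖²`
on the segment `[z, y]`, which stays in the Euclidean ball, together with the fact that the sup
norm of `ℂⁿ` is at most the Euclidean one.
-/

open Complex Finset

section Taylor

variable {E F : Type*} [NormedAddCommGroup E] [NormedSpace ℝ E]
  [NormedAddCommGroup F] [NormedSpace ℝ F]

theorem norm_image_sub_sub_fderiv_le_of_norm_fderiv_sub_le {f : E → F} {x y : E} {L : ℝ}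
    (hf : ∀ w ∈ segment ℝ x y, DifferentiableAt ℝ f w)
    (hL : ∀ w ∈ segment ℝ x y, ‖fderiv ℝ f w - fderiv ℝ f x‖ ≤ L * ‖w - x‖) :
    ‖f y - f x - fderiv ℝ f x (y - x)‖ ≤ L / 2 * ‖y - x‖ ^ 2 := by
  set v := y - x
  have hmem : ∀ t ∈ Set.Icc (0 : ℝ) 1, x + t • v ∈ segment ℝ x y := fun t ht =>
    segment_eq_image' ℝ x y ▸ ⟨t, ht, rfl⟩
  -- The derivative of the remainder `g` grows at most like `L t ‖v‖²`; comparing `g` with the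
  -- primitive `L t² ‖v‖² / 2` of that bound gives the sharp constant `L / 2`.
  set g : ℝ → F := fun t => f (x + t • v) - f x - t • fderiv ℝ f x v
  have hg : ∀ t ∈ Set.Icc (0 : ℝ) 1,
      HasDerivAt g (fderiv ℝ f (x + t • v) v - fderiv ℝ f x v) t := by
    intro t ht
    have hline : HasDerivAt (fun s : ℝ => x + s • v) v t := by
      simpa using ((hasDerivAt_id t).smul_const v).const_add x
    exact (((hf _ (hmem t ht)).hasFDerivAt.comp_hasDerivAt t hline).sub_const (f x)).sub
      (by simpa using (hasDerivAt_id t).smul_const (fderiv ℝ f x v))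
  have hbound : ∀ t ∈ Set.Ico (0 : ℝ) 1,
      ‖fderiv ℝ f (x + t • v) v - fderiv ℝ f x v‖ ≤ L * t * ‖v‖ ^ 2 := by
    intro t ht
    calc ‖fderiv ℝ f (x + t • v) v - fderiv ℝ f x v‖
        = ‖(fderiv ℝ f (x + t • v) - fderiv ℝ f x) v‖ := rfl
      _ ≤ ‖fderiv ℝ f (x + t • v) - fderiv ℝ f x‖ * ‖v‖ := ContinuousLinearMap.le_opNorm _ _
      _ ≤ L * ‖x + t • v - x‖ * ‖v‖ := by
          gcongr; exact hL _ (hmem t (Set.Ico_subset_Icc_self ht))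
      _ = L * t * ‖v‖ ^ 2 := by
          rw [add_sub_cancel_left, norm_smul, Real.norm_of_nonneg ht.1]; ring
  have hB : ∀ t : ℝ, HasDerivAt (fun s => L / 2 * s ^ 2 * ‖v‖ ^ 2) (L * t * ‖v‖ ^ 2) t := by
    intro t
    refine (((hasDerivAt_pow 2 t).const_mul (L / 2)).mul_const (‖v‖ ^ 2)).congr_deriv ?_
    ring
  have key := image_norm_le_of_norm_deriv_right_le_deriv_boundary
    (fun t ht => (hg t ht).continuousAt.continuousWithinAt)
    (fun t ht => (hg t (Set.Ico_subset_Icc_self ht)).hasDerivWithinAt)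
    (by simp [g]) hB hbound (Set.right_mem_Icc.2 zero_le_one)
  simpa [g, v] using key

theorem norm_image_sub_sub_fderiv_le_of_norm_fderiv_fderiv_le {f : E → F} {s : Set E}
    (hs : IsOpen s) (hf : ContDiffOn ℝ 2 f s) {x y : E} (hxy : segment ℝ x y ⊆ s) {C : ℝ}
    (hC : ∀ w ∈ segment ℝ x y, ‖fderiv ℝ (fderiv ℝ f) w‖ ≤ C) :
    ‖f y - f x - fderiv ℝ f x (y - x)‖ ≤ C / 2 * ‖y - x‖ ^ 2 := by
  have hf' : ContDiffOn ℝ 1 (fderiv ℝ f) s := hf.fderiv_of_isOpen hs (by norm_num)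
  refine norm_image_sub_sub_fderiv_le_of_norm_fderiv_sub_le
    (fun w hw => (hf.differentiableOn (by norm_num)).differentiableAt (hs.mem_nhds (hxy hw)))
    (fun w hw => Convex.norm_image_sub_le_of_norm_fderiv_le
      (fun u hu => (hf'.differentiableOn one_ne_zero).differentiableAt (hs.mem_nhds (hxy hu)))
      hC (convex_segment x y) (left_mem_segment ℝ x y) hw)

end Taylor

section CoordinatesOnCn

variable {ι : Type*} [Fintype ι]

theorem sq_norm_le_sum_normSq (v : ι → ℂ) : ‖v‖ ^ 2 ≤ ∑ j, normSq (v j) := by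
  have hsum : 0 ≤ ∑ j, normSq (v j) := sum_nonneg fun j _ => normSq_nonneg _
  have h : ‖v‖ ≤ √(∑ j, normSq (v j)) :=
    (pi_norm_le_iff_of_nonneg (Real.sqrt_nonneg _)).2 fun i => Real.le_sqrt_of_sq_le <| by
      rw [Complex.sq_norm]
      exact single_le_sum (f := fun j => normSq (v j)) (fun j _ => normSq_nonneg _) (mem_univ i)
  calc ‖v‖ ^ 2 ≤ √(∑ j, normSq (v j)) ^ 2 := by gcongr
    _ = ∑ j, normSq (v j) := Real.sq_sqrt hsum

theorem sum_normSq_sub_le_of_mem_segment {x y z : ι → ℂ} (hx : x ∈ segment ℝ z y) :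
    ∑ j, normSq (x j - z j) ≤ ∑ j, normSq (y j - z j) := by
  obtain ⟨t, ⟨ht0, ht1⟩, rfl⟩ := segment_eq_image' ℝ z y ▸ hx
  have hscale : ∀ j, normSq ((z + t • (y - z)) j - z j) = t ^ 2 * normSq (y j - z j) := by
    intro j
    simp [Complex.real_smul, Complex.normSq_mul, sq]
  rw [sum_congr rfl fun j _ => hscale j, ← mul_sum]
  exact mul_le_of_le_one_left (sum_nonneg fun j _ => normSq_nonneg _) (by nlinarith)

theorem ContinuousLinearMap.apply_eq_sum_re_add_sum_im [DecidableEq ι]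
    (ℓ : (ι → ℂ) →L[ℝ] ℝ) (v : ι → ℂ) :
    ℓ v = ∑ j, ℓ (Pi.single j 1) * (v j).re + ∑ j, ℓ (Pi.single j I) * (v j).im := by
  have hsingle : ∀ j, Pi.single j (v j) = (v j).re • (Pi.single j 1 : ι → ℂ) + (v j).im • (Pi.single j I : ι → ℂ) := by
    intro j
    rw [← Pi.single_smul, ← Pi.single_smul, ← Pi.single_add, real_smul, real_smul, mul_one,
      re_add_im]
  conv_lhs => rw [← univ_sum_single v]
  simp only [hsingle, map_sum, map_add, map_smul, smul_eq_mul, sum_add_distrib, mul_comm]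

end CoordinatesOnCn

theorem im_sub_mul_contour (u v : ℂ) (a b R : ℝ) :
    ((u - v) * ((2 / I) * ((a : ℂ) - I * b) / 2 + I * R * (starRingEnd ℂ) (u - v))).im
      = a * (v - u).re + b * (v - u).im + R * normSq (v - u) := by
  simp only [mul_im, mul_re, div_re, div_im, normSq_apply, add_re, add_im, sub_re, sub_im,
    I_re, I_im, ofReal_re, ofReal_im, conj_re, conj_im, re_ofNat, im_ofNat]
  ring

theorem stmt_16_general (n : ℕ) (Φ : (Fin n → ℂ) → ℝ) (Ω : Set (Fin n → ℂ))
    (z : Fin n → ℂ) (R r Cr : ℝ)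
    (hΩ : IsOpen Ω) (hΦ : ContDiffOn ℝ 2 Φ Ω)
    (hball : ∀ y : Fin n → ℂ, (∑ j, Complex.normSq (y j - z j)) ≤ r ^ 2 → y ∈ Ω)
    (hCr : ∀ y : Fin n → ℂ, (∑ j, Complex.normSq (y j - z j)) ≤ r ^ 2 →
      ‖fderiv ℝ (fun w => fderiv ℝ Φ w) y‖ ≤ 2 * Cr) :
    ∀ y : Fin n → ℂ,
      (Φ y - (∑ j, (z j - y j) *
          ((2 / Complex.I) *
              (((fderiv ℝ Φ z (Pi.single j 1) : ℝ) : ℂ)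
                - Complex.I * ((fderiv ℝ Φ z (Pi.single j Complex.I) : ℝ) : ℂ)) / 2
            + Complex.I * (R : ℂ) * (starRingEnd ℂ) (z j - y j))).im
        - Φ z
        = Φ y - Φ z
          - (∑ j, fderiv ℝ Φ z (Pi.single j 1) * (y j - z j).re)
          - (∑ j, fderiv ℝ Φ z (Pi.single j Complex.I) * (y j - z j).im)
          - R * ∑ j, Complex.normSq (y j - z j))
      ∧ ((∑ j, Complex.normSq (y j - z j)) ≤ r ^ 2 →
          Φ y - (∑ j, (z j - y j) *
              ((2 / Complex.I) *
                  (((fderiv ℝ Φ z (Pi.single j 1) : ℝ) : ℂ)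
                    - Complex.I * ((fderiv ℝ Φ z (Pi.single j Complex.I) : ℝ) : ℂ)) / 2
                + Complex.I * (R : ℂ) * (starRingEnd ℂ) (z j - y j))).im
            - Φ z
            ≤ (Cr - R) * ∑ j, Complex.normSq (y j - z j)) := by
  intro y
  set lin := ∑ j, fderiv ℝ Φ z (Pi.single j 1) * (y j - z j).re
    + ∑ j, fderiv ℝ Φ z (Pi.single j I) * (y j - z j).im
  have hlin : fderiv ℝ Φ z (y - z) = lin := by
    simpa only [Pi.sub_apply] using (fderiv ℝ Φ z).apply_eq_sum_re_add_sum_im (y - z)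
  have him : (∑ j, (z j - y j) *
        ((2 / I) * (((fderiv ℝ Φ z (Pi.single j 1) : ℝ) : ℂ)
            - I * ((fderiv ℝ Φ z (Pi.single j I) : ℝ) : ℂ)) / 2
          + I * (R : ℂ) * (starRingEnd ℂ) (z j - y j))).im
      = lin + R * ∑ j, normSq (y j - z j) := by
    simp only [im_sum, im_sub_mul_contour, sum_add_distrib, ← mul_sum, lin]
  rw [him]
  refine ⟨by ring, fun hy => ?_⟩
  have hseg : ∀ w ∈ segment ℝ z y, ∑ j, normSq (w j - z j) ≤ r ^ 2 := fun w hw =>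
    (sum_normSq_sub_le_of_mem_segment hw).trans hy
  have htaylor := norm_image_sub_sub_fderiv_le_of_norm_fderiv_fderiv_le hΩ hΦ
    (fun w hw => hball w (hseg w hw)) (fun w hw => hCr w (hseg w hw))
  have hCr_nonneg : 0 ≤ Cr := by
    have := hCr z (by simpa using sq_nonneg r)
    linarith [norm_nonneg (fderiv ℝ (fun w => fderiv ℝ Φ w) z)]
  have hnorm : ‖y - z‖ ^ 2 ≤ ∑ j, normSq (y j - z j) := sq_norm_le_sum_normSq (y - z)
  have hremainder : Φ y - Φ z - lin ≤ Cr * ∑ j, normSq (y j - z j) := calc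
    Φ y - Φ z - lin ≤ ‖Φ y - Φ z - fderiv ℝ Φ z (y - z)‖ := hlin ▸ Real.le_norm_self _
    _ ≤ 2 * Cr / 2 * ‖y - z‖ ^ 2 := htaylor
    _ ≤ Cr * ∑ j, normSq (y j - z j) := by rw [mul_div_cancel_left₀ _ two_ne_zero]; gcongr
  linarith

/-- Along the contour `ζ = (2/i)∇_zΦ(z) + iR·conj(z-y)` one has
`φ_z(y,ζ) - Φ(z) = Φ(y) - Φ(z) - ∇_{Re z}Φ(z)·Re(y-z) - ∇_{Im z}Φ(z)·Im(y-z) - R|y-z|²`,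
and, if `C_r` bounds half the Hessian of `Φ` on the ball of radius `r`,
`φ_z(y,ζ) - Φ(z) ≤ (C_r - R)|y-z|²` for `|y-z| ≤ r`; so the contour is good once
`R > C_r`.  Here `φ_z(y,ζ) = Φ(y) - Im((z-y)·ζ)`. -/
theorem stmt_16 (n : ℕ) (Φ : (Fin n → ℂ) → ℝ) (Ω : Set (Fin n → ℂ))
    (z : Fin n → ℂ) (R r Cr : ℝ) (hr : 0 < r)
    (hΩ : IsOpen Ω) (hΦ : ContDiffOn ℝ 2 Φ Ω)
    (hball : ∀ y : Fin n → ℂ, (∑ j, Complex.normSq (y j - z j)) ≤ r ^ 2 → y ∈ Ω)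
    (hCr : ∀ y : Fin n → ℂ, (∑ j, Complex.normSq (y j - z j)) ≤ r ^ 2 →
      ‖fderiv ℝ (fun w => fderiv ℝ Φ w) y‖ ≤ 2 * Cr) :
    ∀ y : Fin n → ℂ,
      (Φ y - (∑ j, (z j - y j) *
          ((2 / Complex.I) *
              (((fderiv ℝ Φ z (Pi.single j 1) : ℝ) : ℂ)
                - Complex.I * ((fderiv ℝ Φ z (Pi.single j Complex.I) : ℝ) : ℂ)) / 2
            + Complex.I * (R : ℂ) * (starRingEnd ℂ) (z j - y j))).im
        - Φ z
        = Φ y - Φ z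
          - (∑ j, fderiv ℝ Φ z (Pi.single j 1) * (y j - z j).re)
          - (∑ j, fderiv ℝ Φ z (Pi.single j Complex.I) * (y j - z j).im)
          - R * ∑ j, Complex.normSq (y j - z j))
      ∧ ((∑ j, Complex.normSq (y j - z j)) ≤ r ^ 2 →
          Φ y - (∑ j, (z j - y j) *
              ((2 / Complex.I) *
                  (((fderiv ℝ Φ z (Pi.single j 1) : ℝ) : ℂ)
                    - Complex.I * ((fderiv ℝ Φ z (Pi.single j Complex.I) : ℝ) : ℂ)) / 2
                + Complex.I * (R : ℂ) * (starRingEnd ℂ) (z j - y j))).im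
            - Φ z
            ≤ (Cr - R) * ∑ j, Complex.normSq (y j - z j)) :=
  stmt_16_general n Φ Ω z R r Cr hΩ hΦ hball hCr
end
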